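/- arXiv:0906.3352 — 6 statements merged into one kernel-verified Lean document; each statement's English description precedes it below -/
import Mathlib

section
/- Let N be a positive integer, let Z be an N×N Hermitian positive semidefinite complex matrix, let c > 0 and x > 0 be reals, and let s ∈ ℂ^N with ‖s‖ = 1. Then the (real) quadratic forms satisfy s^H (Z + c·I)^{-1} (Z + x·I)^{-1} (Z + c·I)^{-1} s ≥ (s^H (Z + x·I)^{-1} s) · (s^H (Z + c·I)^{-2} s). -/
/-!
Diagonalising `Z = U diag(λ) Uᴴ`, every matrix in the statement is `f(Z)` for a real function `f`,
and `sᴴ f(Z) s = ∑ᵢ wᵢ f(λᵢ)` with weights `wᵢ = |(Uᴴ s)ᵢ|²` summing to `‖s‖² = 1`. The claim is then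
Chebyshev's sum inequality for this probability vector and the two functions `(λ + x)⁻¹` and
`(λ + c)⁻²`, both decreasing on `[0, ∞)`.
-/

open Matrix ComplexOrder

theorem Finset.sum_mul_sum_le_sum_mul_sum_mul_of_monovaryOn {ι α : Type*} [CommRing α]
    [LinearOrder α] [IsStrictOrderedRing α] {s : Finset ι} {w f g : ι → α}
    (hw : ∀ i ∈ s, 0 ≤ w i) (hfg : MonovaryOn f g s) :
    (∑ i ∈ s, w i * f i) * (∑ i ∈ s, w i * g i) ≤ (∑ i ∈ s, w i) * ∑ i ∈ s, w i * (f i * g i) := by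
  have hdouble : 0 ≤ ∑ i ∈ s, ∑ j ∈ s, w i * w j * ((f j - f i) * (g j - g i)) :=
    Finset.sum_nonneg fun i hi => Finset.sum_nonneg fun j hj =>
      mul_nonneg (mul_nonneg (hw i hi) (hw j hj)) (hfg.sub_mul_sub_nonneg hi hj)
  have hexpand : ∑ i ∈ s, ∑ j ∈ s, w i * w j * ((f j - f i) * (g j - g i)) =
      2 * ((∑ i ∈ s, w i) * ∑ i ∈ s, w i * (f i * g i) -
        (∑ i ∈ s, w i * f i) * (∑ i ∈ s, w i * g i)) := by
    have hterm : ∀ i j, w i * w j * ((f j - f i) * (g j - g i)) =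
        w i * (w j * (f j * g j)) - w i * g i * (w j * f j) - w i * f i * (w j * g j) +
          w i * (f i * g i) * w j := fun i j => by ring
    simp only [hterm, Finset.sum_add_distrib, Finset.sum_sub_distrib, ← Finset.mul_sum,
      ← Finset.sum_mul]
    ring
  linarith

theorem antitoneOn_inv_add_const {a : ℝ} (ha : 0 < a) :
    AntitoneOn (fun y => (y + a)⁻¹) (Set.Ici 0) := fun y hy _ _ hyz =>
  inv_anti₀ (by linarith [Set.mem_Ici.mp hy]) (by linarith)

theorem antitoneOn_inv_add_const_mul_self {a : ℝ} (ha : 0 < a) :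
    AntitoneOn (fun y => (y + a)⁻¹ * (y + a)⁻¹) (Set.Ici 0) := fun y hy z hz hyz =>
  mul_self_le_mul_self (inv_nonneg.mpr (by linarith [Set.mem_Ici.mp hz]))
    (antitoneOn_inv_add_const ha hy hz hyz)

namespace Matrix

variable {n 𝕜 : Type*} [RCLike 𝕜] [Fintype n] [DecidableEq n] {A : Matrix n n 𝕜}

namespace IsHermitian

theorem re_dotProduct_cfc_mulVec (hA : A.IsHermitian) (f : ℝ → ℝ) (s : n → 𝕜) :
    RCLike.re (star s ⬝ᵥ cfc f A *ᵥ s) =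
      ∑ i, ‖(star (hA.eigenvectorUnitary : Matrix n n 𝕜) *ᵥ s) i‖ ^ 2 * f (hA.eigenvalues i) := by
  rw [hA.cfc_eq, IsHermitian.cfc, Unitary.conjStarAlgAut_apply, ← mulVec_mulVec, ← mulVec_mulVec,
    dotProduct_mulVec]
  set v := star (hA.eigenvectorUnitary : Matrix n n 𝕜) *ᵥ s
  have hv : star s ᵥ* (hA.eigenvectorUnitary : Matrix n n 𝕜) = star v := by
    rw [star_mulVec, ← star_eq_conjTranspose, star_star]
  simp only [hv, dotProduct, mulVec_diagonal, Function.comp_apply, map_sum]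
  refine Finset.sum_congr rfl fun i _ => ?_
  rw [Pi.star_apply, mul_left_comm, RCLike.star_def, RCLike.conj_mul, mul_comm]
  norm_cast

theorem sum_norm_sq_star_eigenvectorUnitary_mulVec (hA : A.IsHermitian) (s : n → 𝕜) :
    ∑ i, ‖(star (hA.eigenvectorUnitary : Matrix n n 𝕜) *ᵥ s) i‖ ^ 2 = RCLike.re (star s ⬝ᵥ s) := by
  simpa [cfc_const_one ℝ A] using (hA.re_dotProduct_cfc_mulVec (fun _ => 1) s).symm

theorem inv_add_smul_one_eq_cfc (hA : A.IsHermitian) {t : ℝ} (ht : -t ∉ spectrum ℝ A) :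
    (A + (t : 𝕜) • 1)⁻¹ = cfc (fun y => (y + t)⁻¹) A := by
  have hcont (g : ℝ → ℝ) : ContinuousOn g (spectrum ℝ A) := A.finite_real_spectrum.continuousOn g
  have hshift : A + (t : 𝕜) • 1 = cfc (fun y => y + t) A := by
    rw [cfc_add_const t _ A, cfc_id' ℝ A, Algebra.algebraMap_eq_smul_one,
      RCLike.real_smul_eq_coe_smul (K := 𝕜)]
  apply inv_eq_left_inv
  rw [hshift, ← cfc_mul _ _ A (hcont _) (hcont _)]
  refine (cfc_congr fun y hy => ?_).trans (cfc_const_one ℝ A)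
  have hy_ne : y + t ≠ 0 := fun h => ht (by rwa [← eq_neg_of_add_eq_zero_left h])
  exact inv_mul_cancel₀ hy_ne

end IsHermitian

theorem PosSemidef.neg_notMem_spectrum (hA : A.PosSemidef) {t : ℝ} (ht : 0 < t) :
    -t ∉ spectrum ℝ A := by
  rw [hA.isHermitian.spectrum_real_eq_range_eigenvalues]
  rintro ⟨i, hi⟩
  linarith [hA.eigenvalues_nonneg i]

end Matrix

theorem quadratic_form_inequality_general {N : ℕ}
    (Z : Matrix (Fin N) (Fin N) ℂ) (hZ : Z.PosSemidef)
    (c x : ℝ) (hc : 0 < c) (hx : 0 < x)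
    (s : Fin N → ℂ) (hs : star s ⬝ᵥ s = 1) :
    (star s ⬝ᵥ (((Z + (c : ℂ) • 1)⁻¹ * (Z + (x : ℂ) • 1)⁻¹ * (Z + (c : ℂ) • 1)⁻¹) *ᵥ s)).re ≥
      (star s ⬝ᵥ ((Z + (x : ℂ) • 1)⁻¹ *ᵥ s)).re *
        (star s ⬝ᵥ (((Z + (c : ℂ) • 1)⁻¹ * (Z + (c : ℂ) • 1)⁻¹) *ᵥ s)).re := by
  have hH := hZ.isHermitian
  have hcont (g : ℝ → ℝ) : ContinuousOn g (spectrum ℝ Z) := Z.finite_real_spectrum.continuousOn g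
  have hres {t : ℝ} (ht : 0 < t) : (Z + (t : ℂ) • 1)⁻¹ = cfc (fun y => (y + t)⁻¹) Z :=
    hH.inv_add_smul_one_eq_cfc (hZ.neg_notMem_spectrum ht)
  rw [hres hc, hres hx, ← cfc_mul _ _ Z (hcont _) (hcont _),
    ← cfc_mul _ _ Z (hcont _) (hcont _), ← cfc_mul _ _ Z (hcont _) (hcont _)]
  have hmono := ((antitoneOn_inv_add_const hx).monovaryOn
    (antitoneOn_inv_add_const_mul_self hc)).comp_right hH.eigenvalues
  have hcheb := Finset.sum_mul_sum_le_sum_mul_sum_mul_of_monovaryOn (s := Finset.univ)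
    (w := fun i => ‖(star (hH.eigenvectorUnitary : Matrix (Fin N) (Fin N) ℂ) *ᵥ s) i‖ ^ 2)
    (fun i _ => sq_nonneg _) (hmono.subset fun i _ => hZ.eigenvalues_nonneg i)
  rw [hH.sum_norm_sq_star_eigenvectorUnitary_mulVec, hs, RCLike.one_re, one_mul] at hcheb
  simp only [← RCLike.re_to_complex, hH.re_dotProduct_cfc_mulVec]
  refine ge_iff_le.mpr (hcheb.trans_eq (Finset.sum_congr rfl fun i _ => ?_))
  simp only [Function.comp_apply]
  ring

/-- For a Hermitian positive semidefinite `Z`, positive reals `c, x`, and a unit-norm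
vector `s`, the quadratic forms (which are real) satisfy
`sᴴ (Z + c I)⁻¹ (Z + x I)⁻¹ (Z + c I)⁻¹ s ≥ (sᴴ (Z + x I)⁻¹ s) (sᴴ (Z + c I)⁻² s)`. -/
theorem quadratic_form_inequality {N : ℕ} (hN : 0 < N)
    (Z : Matrix (Fin N) (Fin N) ℂ) (hZ : Z.PosSemidef)
    (c x : ℝ) (hc : 0 < c) (hx : 0 < x)
    (s : Fin N → ℂ) (hs : star s ⬝ᵥ s = 1) :
    (star s ⬝ᵥ (((Z + (c : ℂ) • 1)⁻¹ * (Z + (x : ℂ) • 1)⁻¹ * (Z + (c : ℂ) • 1)⁻¹) *ᵥ s)).re ≥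
      (star s ⬝ᵥ ((Z + (x : ℂ) • 1)⁻¹ *ᵥ s)).re *
        (star s ⬝ᵥ (((Z + (c : ℂ) • 1)⁻¹ * (Z + (c : ℂ) • 1)⁻¹) *ᵥ s)).re :=
  quadratic_form_inequality_general Z hZ c x hc hx s hs
end

section
/- Let M and K be positive integers with K ≤ M, let S ∈ ℂ^{M×K} have unit-norm, linearly independent columns s_1,…,s_K, let a_1,…,a_K > 0, let A = diag(a_1²,…,a_K²), let σ² > 0, and set M_a = S A S^H + σ²·I_M. If every column s_k of S is an eigenvector of M_a, then S^H S = I_K, i.e. the columns of S are orthonormal. -/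
/-!
Subtracting the shift `σ²`, the column `s_k = S e_k` satisfies `S (A Sᴴ S e_k) = c s_k = S (c e_k)`.
Linearly independent columns make `S` injective, so `A (Sᴴ S) e_k = c e_k`; since `A` is diagonal
with nonzero entries, the `k`-th column of `Sᴴ S` vanishes off the diagonal, and the unit norms
give the diagonal entries.
-/

open Matrix

namespace Matrix

variable {m n R : Type*} [Fintype m] [Fintype n] [CommRing R]

theorem mulVec_eq_sub_smul_of_add_smul_one_mulVec_eq_smul [DecidableEq m]
    {B : Matrix m m R} {σ μ : R} {v : m → R} (h : (B + σ • 1) *ᵥ v = μ • v) :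
    B *ᵥ v = (μ - σ) • v := by
  rw [add_mulVec, smul_mulVec, one_mulVec] at h
  rw [sub_smul, ← h, add_sub_cancel_right]

theorem diagonal_mul_mul_mulVec_single_of_mulVec_col_eq_smul [DecidableEq n] {S : Matrix m n R}
    (hS : Function.Injective S.mulVec) (d : n → R) (T : Matrix n m R) {k : n} {c : R}
    (h : (S * diagonal d * T) *ᵥ S.col k = c • S.col k) :
    (diagonal d * (T * S)) *ᵥ Pi.single k 1 = Pi.single k c := by
  apply hS
  rw [mulVec_mulVec, ← Matrix.mul_assoc, ← Matrix.mul_assoc, ← mulVec_mulVec, mulVec_single_one,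
    h, mulVec_single, op_smul_eq_smul]

theorem mul_apply_eq_zero_of_mulVec_col_eq_smul [DecidableEq n] [NoZeroDivisors R]
    {S : Matrix m n R} (hS : Function.Injective S.mulVec) {d : n → R} (T : Matrix n m R)
    {j k : n} {c : R} (h : (S * diagonal d * T) *ᵥ S.col k = c • S.col k)
    (hd : d j ≠ 0) (hjk : j ≠ k) : (T * S) j k = 0 := by
  have hj := congrFun (diagonal_mul_mul_mulVec_single_of_mulVec_col_eq_smul hS d T h) j
  rw [mulVec_single_one, col_apply, diagonal_mul, Pi.single_eq_of_ne hjk] at hj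
  exact (mul_eq_zero.mp hj).resolve_left hd

end Matrix

theorem fixed_point_columns_orthonormal_general {M K : ℕ}
    (S : Matrix (Fin M) (Fin K) ℂ)
    (hScols : ∀ j, star (Sᵀ j) ⬝ᵥ (Sᵀ j) = 1)
    (hSli : LinearIndependent ℂ (fun j => Sᵀ j))
    (a : Fin K → ℝ) (ha : ∀ j, 0 < a j)
    (A : Matrix (Fin K) (Fin K) ℂ) (hA : A = Matrix.diagonal fun j => ((a j) ^ 2 : ℂ))
    (σ2 : ℝ)
    (Ma : Matrix (Fin M) (Fin M) ℂ) (hMa : Ma = S * A * Sᴴ + (σ2 : ℂ) • 1)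
    (heig : ∀ k, ∃ μ : ℂ, Ma *ᵥ (Sᵀ k) = μ • (Sᵀ k)) :
    Sᴴ * S = 1 := by
  ext j k
  obtain rfl | hjk := eq_or_ne j k
  · rw [one_apply_eq]
    exact hScols j
  · obtain ⟨μ, hμ⟩ := heig k
    rw [hMa, hA] at hμ
    rw [one_apply_ne hjk]
    exact mul_apply_eq_zero_of_mulVec_col_eq_smul (mulVec_injective_iff.mpr hSli) Sᴴ
      (mulVec_eq_sub_smul_of_add_smul_one_mulVec_eq_smul hμ) (by simpa using (ha j).ne') hjk

/-- If `K ≤ M`, the columns of `S` are unit-norm and linearly independent and each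
column is an eigenvector of `M_a = S A Sᴴ + σ² I`, then the columns of `S` are
orthonormal: `Sᴴ S = I_K`. -/
theorem fixed_point_columns_orthonormal {M K : ℕ} (hM : 0 < M) (hK : 0 < K)
    (hKM : K ≤ M)
    (S : Matrix (Fin M) (Fin K) ℂ)
    (hScols : ∀ j, star (Sᵀ j) ⬝ᵥ (Sᵀ j) = 1)
    (hSli : LinearIndependent ℂ (fun j => Sᵀ j))
    (a : Fin K → ℝ) (ha : ∀ j, 0 < a j)
    (A : Matrix (Fin K) (Fin K) ℂ) (hA : A = Matrix.diagonal fun j => ((a j) ^ 2 : ℂ))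
    (σ2 : ℝ) (hσ2 : 0 < σ2)
    (Ma : Matrix (Fin M) (Fin M) ℂ) (hMa : Ma = S * A * Sᴴ + (σ2 : ℂ) • 1)
    (heig : ∀ k, ∃ μ : ℂ, Ma *ᵥ (Sᵀ k) = μ • (Sᵀ k)) :
    Sᴴ * S = 1 :=
  fixed_point_columns_orthonormal_general S hScols hSli a ha A hA σ2 Ma hMa heig
end

section
/- For all v_a, w_a ∈ 𝒱, the Hermitian inner product v_a^H w_a is a real number lying in [−1, 1]; moreover the function d(S', S'') = max_{k=1,…,K} arccos(s'_k{}^H s''_k), where s'_k and s''_k are the k-th columns of S' and S'', is a metric on 𝒮 (in particular it satisfies the triangle inequality). -/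
/-!
For `v = (u; ū)` and `w = (x; x̄)` one has `vᴴ w = uᴴ x + conj (uᴴ x) = 2 Re (uᴴ x)`, so the
inner product is real, and Cauchy–Schwarz puts it in `[-1, 1]` for unit vectors.
`Re (vᴴ w)` is the inner product of the real Euclidean space underlying `ℂ^{2N}`, so for unit
vectors `arccos (Re (vᴴ w))` is the angle between `v` and `w` in that space. Angles between unit
vectors are symmetric, vanish only on equal vectors and satisfy the triangle inequality, and
each of these properties passes to the maximum over the columns.
-/

open Matrix

/-- The set `𝒱` of augmented unit vectors: vectors of `ℂ^{2N}` of the form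
`(v; v̄)` (a vector stacked over its componentwise conjugate) with unit norm. -/
def AugUnitVec (N : ℕ) : Set ((Fin N ⊕ Fin N) → ℂ) :=
  {w | (∃ v : Fin N → ℂ, w = Sum.elim v (star v)) ∧ star w ⬝ᵥ w = 1}

/-- The set `𝒮` of `2N × K` complex matrices all of whose columns lie in `𝒱`. -/
def AugSigSet (N K : ℕ) : Set (Matrix (Fin N ⊕ Fin N) (Fin K) ℂ) :=
  {S | ∀ k, Sᵀ k ∈ AugUnitVec N}

/-- `d(S', S'') = max_k arccos (s'ₖᴴ s''ₖ)` (the inner products being real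
for matrices in `𝒮`). -/
noncomputable def augDist {N K : ℕ} (hK : 0 < K)
    (S' S'' : Matrix (Fin N ⊕ Fin N) (Fin K) ℂ) : ℝ :=
  Finset.univ.sup' (Finset.univ_nonempty_iff.mpr ⟨⟨0, hK⟩⟩)
    fun k => Real.arccos ((star (S'ᵀ k) ⬝ᵥ (S''ᵀ k)).re)

open Real InnerProductGeometry

section ComplexInnerProductSpace

variable {E : Type*} [NormedAddCommGroup E] [InnerProductSpace ℂ E] {x y z : E}

attribute [local instance] InnerProductSpace.complexToReal

lemma arccos_re_inner_eq_angle (hx : ‖x‖ = 1) (hy : ‖y‖ = 1) :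
    arccos (inner ℂ x y).re = angle x y := by
  rw [angle, real_inner_eq_re_inner ℂ, hx, hy, mul_one, div_one, RCLike.re_to_complex]

lemma arccos_re_inner_le_add (hx : ‖x‖ = 1) (hy : ‖y‖ = 1) (hz : ‖z‖ = 1) :
    arccos (inner ℂ x z).re ≤ arccos (inner ℂ x y).re + arccos (inner ℂ y z).re := by
  rw [arccos_re_inner_eq_angle hx hz, arccos_re_inner_eq_angle hx hy,
    arccos_re_inner_eq_angle hy hz]
  exact angle_le_angle_add_angle x y z

lemma arccos_re_inner_eq_zero_iff (hx : ‖x‖ = 1) (hy : ‖y‖ = 1) :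
    arccos (inner ℂ x y).re = 0 ↔ x = y := by
  rw [arccos_re_inner_eq_angle hx hy]
  refine ⟨fun h => eq_of_angle_eq_zero_of_norm_eq h (hx.trans hy.symm), ?_⟩
  rintro rfl
  exact angle_self (norm_ne_zero_iff.mp (hx ▸ one_ne_zero))

end ComplexInnerProductSpace

section DotProduct

variable {ι : Type*} [Fintype ι] {u v w : ι → ℂ}

lemma star_dotProduct_eq_inner (v w : ι → ℂ) :
    star v ⬝ᵥ w = inner ℂ (WithLp.toLp 2 v : EuclideanSpace ℂ ι) (WithLp.toLp 2 w) := by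
  rw [EuclideanSpace.inner_toLp_toLp, dotProduct_comm]

lemma norm_toLp_eq_one (hv : star v ⬝ᵥ v = 1) :
    ‖(WithLp.toLp 2 v : EuclideanSpace ℂ ι)‖ = 1 := by
  rw [norm_eq_sqrt_re_inner (𝕜 := ℂ), ← star_dotProduct_eq_inner, hv]
  simp

lemma abs_re_star_dotProduct_le_one (hv : star v ⬝ᵥ v = 1) (hw : star w ⬝ᵥ w = 1) :
    |(star v ⬝ᵥ w).re| ≤ 1 := by
  have h := norm_inner_le_norm (𝕜 := ℂ) (WithLp.toLp 2 v : EuclideanSpace ℂ ι) (WithLp.toLp 2 w)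
  rw [norm_toLp_eq_one hv, norm_toLp_eq_one hw, mul_one, ← star_dotProduct_eq_inner] at h
  exact (Complex.abs_re_le_norm _).trans h

lemma re_star_dotProduct_comm (v w : ι → ℂ) : (star v ⬝ᵥ w).re = (star w ⬝ᵥ v).re := by
  rw [star_dotProduct v, Complex.star_def, Complex.conj_re]

lemma arccos_re_star_dotProduct_le_add (hu : star u ⬝ᵥ u = 1) (hv : star v ⬝ᵥ v = 1)
    (hw : star w ⬝ᵥ w = 1) :
    arccos (star u ⬝ᵥ w).re ≤ arccos (star u ⬝ᵥ v).re + arccos (star v ⬝ᵥ w).re := by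
  simp only [star_dotProduct_eq_inner]
  exact arccos_re_inner_le_add (norm_toLp_eq_one hu) (norm_toLp_eq_one hv) (norm_toLp_eq_one hw)

lemma arccos_re_star_dotProduct_eq_zero_iff (hv : star v ⬝ᵥ v = 1) (hw : star w ⬝ᵥ w = 1) :
    arccos (star v ⬝ᵥ w).re = 0 ↔ v = w := by
  rw [star_dotProduct_eq_inner, arccos_re_inner_eq_zero_iff (norm_toLp_eq_one hv)
    (norm_toLp_eq_one hw), (WithLp.toLp_injective 2).eq_iff]

lemma star_sumElim_dotProduct_sumElim (v w : ι → ℂ) :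
    star (Sum.elim v (star v)) ⬝ᵥ Sum.elim w (star w) = (2 * (star v ⬝ᵥ w).re : ℝ) := by
  rw [Function.star_sumElim, star_star, sumElim_dotProduct_sumElim, dotProduct_comm v,
    star_dotProduct w v, Complex.star_def, Complex.add_conj]

end DotProduct

section AugDist

variable {N K : ℕ} (hK : 0 < K)

lemma le_augDist (S S' : Matrix (Fin N ⊕ Fin N) (Fin K) ℂ) (k : Fin K) :
    arccos (star (Sᵀ k) ⬝ᵥ S'ᵀ k).re ≤ augDist hK S S' :=
  Finset.le_sup' (fun k => arccos (star (Sᵀ k) ⬝ᵥ S'ᵀ k).re) (Finset.mem_univ k)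

lemma augDist_le_iff {S S' : Matrix (Fin N ⊕ Fin N) (Fin K) ℂ} {r : ℝ} :
    augDist hK S S' ≤ r ↔ ∀ k, arccos (star (Sᵀ k) ⬝ᵥ S'ᵀ k).re ≤ r := by
  simp [augDist]

lemma augDist_nonneg (S S' : Matrix (Fin N ⊕ Fin N) (Fin K) ℂ) : 0 ≤ augDist hK S S' :=
  (arccos_nonneg _).trans (le_augDist hK S S' ⟨0, hK⟩)

lemma augDist_comm (S S' : Matrix (Fin N ⊕ Fin N) (Fin K) ℂ) :
    augDist hK S S' = augDist hK S' S :=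
  Finset.sup'_congr _ rfl fun k _ => by rw [re_star_dotProduct_comm]

lemma augDist_eq_zero_iff {S S' : Matrix (Fin N ⊕ Fin N) (Fin K) ℂ}
    (hS : ∀ k, star (Sᵀ k) ⬝ᵥ Sᵀ k = 1) (hS' : ∀ k, star (S'ᵀ k) ⬝ᵥ S'ᵀ k = 1) :
    augDist hK S S' = 0 ↔ S = S' :=
  calc augDist hK S S' = 0 ↔ augDist hK S S' ≤ 0 := (augDist_nonneg hK S S').ge_iff_eq'.symm
    _ ↔ ∀ k, Sᵀ k = S'ᵀ k := (augDist_le_iff hK).trans <| forall_congr' fun k =>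
          (arccos_nonneg _).ge_iff_eq'.trans (arccos_re_star_dotProduct_eq_zero_iff (hS k) (hS' k))
    _ ↔ S = S' := (transpose_inj.symm.trans funext_iff).symm

lemma augDist_triangle {S S' S'' : Matrix (Fin N ⊕ Fin N) (Fin K) ℂ}
    (hS : ∀ k, star (Sᵀ k) ⬝ᵥ Sᵀ k = 1) (hS' : ∀ k, star (S'ᵀ k) ⬝ᵥ S'ᵀ k = 1)
    (hS'' : ∀ k, star (S''ᵀ k) ⬝ᵥ S''ᵀ k = 1) :
    augDist hK S S'' ≤ augDist hK S S' + augDist hK S' S'' :=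
  (augDist_le_iff hK).2 fun k => (arccos_re_star_dotProduct_le_add (hS k) (hS' k) (hS'' k)).trans
    (add_le_add (le_augDist hK S S' k) (le_augDist hK S' S'' k))

end AugDist

theorem augDist_is_metric_general {N K : ℕ} (hK : 0 < K) :
    (∀ v ∈ AugUnitVec N, ∀ w ∈ AugUnitVec N,
      (star v ⬝ᵥ w).im = 0 ∧ -1 ≤ (star v ⬝ᵥ w).re ∧ (star v ⬝ᵥ w).re ≤ 1) ∧
    (∀ S ∈ AugSigSet N K, ∀ S' ∈ AugSigSet N K, 0 ≤ augDist hK S S') ∧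
    (∀ S ∈ AugSigSet N K, ∀ S' ∈ AugSigSet N K, (augDist hK S S' = 0 ↔ S = S')) ∧
    (∀ S ∈ AugSigSet N K, ∀ S' ∈ AugSigSet N K, augDist hK S S' = augDist hK S' S) ∧
    (∀ S ∈ AugSigSet N K, ∀ S' ∈ AugSigSet N K, ∀ S'' ∈ AugSigSet N K,
      augDist hK S S'' ≤ augDist hK S S' + augDist hK S' S'') := by
  refine ⟨?_, fun S _ S' _ => augDist_nonneg hK S S',
    fun S hS S' hS' => augDist_eq_zero_iff hK (fun k => (hS k).2) (fun k => (hS' k).2),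
    fun S _ S' _ => augDist_comm hK S S',
    fun S hS S' hS' S'' hS'' =>
      augDist_triangle hK (fun k => (hS k).2) (fun k => (hS' k).2) (fun k => (hS'' k).2)⟩
  rintro _ ⟨⟨v, rfl⟩, hv⟩ _ ⟨⟨w, rfl⟩, hw⟩
  refine ⟨by rw [star_sumElim_dotProduct_sumElim, Complex.ofReal_im], ?_⟩
  exact abs_le.mp (abs_re_star_dotProduct_le_one hv hw)

/-- For augmented unit vectors the Hermitian inner product is real and lies in
`[-1, 1]`, and `d(S', S'') = max_k arccos (s'ₖᴴ s''ₖ)` is a metric on `𝒮`. -/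
theorem augDist_is_metric {N K : ℕ} (hN : 0 < N) (hK : 0 < K) :
    (∀ v ∈ AugUnitVec N, ∀ w ∈ AugUnitVec N,
      (star v ⬝ᵥ w).im = 0 ∧ -1 ≤ (star v ⬝ᵥ w).re ∧ (star v ⬝ᵥ w).re ≤ 1) ∧
    (∀ S ∈ AugSigSet N K, ∀ S' ∈ AugSigSet N K, 0 ≤ augDist hK S S') ∧
    (∀ S ∈ AugSigSet N K, ∀ S' ∈ AugSigSet N K, (augDist hK S S' = 0 ↔ S = S')) ∧
    (∀ S ∈ AugSigSet N K, ∀ S' ∈ AugSigSet N K, augDist hK S S' = augDist hK S' S) ∧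
    (∀ S ∈ AugSigSet N K, ∀ S' ∈ AugSigSet N K, ∀ S'' ∈ AugSigSet N K,
      augDist hK S S'' ≤ augDist hK S S' + augDist hK S' S'') :=
  augDist_is_metric_general hK
end

section
/- Let K and N be positive integers and let c_1,…,c_K be positive reals. Then the set of indices i such that 2N − #{j : c_j ≥ c_i} > 0 and c_i > (∑_{j : c_j < c_i} c_j) / (2N − #{j : c_j ≥ c_i}) has cardinality at most 2N − 1, i.e. in a widely-linear system there can be at most 2N − 1 oversized users. -/
/-! An oversized user `i` has fewer than `2N` users at least as strong as itself. Among all users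
with this property take one of least received power: every such user is at least as strong as it,
so there are fewer than `2N` of them. -/

open scoped Classical

open Finset

theorem Finset.card_filter_card_filter_le_lt_le {ι β : Type*} [LinearOrder β]
    (s : Finset ι) (f : ι → β) (m : ℕ) :
    #{i ∈ s | #{j ∈ s | f i ≤ f j} < m} ≤ m - 1 := by
  set T := {i ∈ s | #{j ∈ s | f i ≤ f j} < m}
  rcases T.eq_empty_or_nonempty with hT | hT
  · simp [hT]
  obtain ⟨i, hiT, hmin⟩ := T.exists_min_image f hT
  have hi : #{j ∈ s | f i ≤ f j} < m := (mem_filter.mp hiT).2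
  have hTi : T ⊆ {j ∈ s | f i ≤ f j} := fun j hj =>
    mem_filter.mpr ⟨(mem_filter.mp hj).1, hmin j hj⟩
  have := card_le_card hTi
  omega

theorem card_oversized_users_le_general {K N : ℕ}
    (c : Fin K → ℝ) :
    (Finset.univ.filter (fun i : Fin K =>
        (Finset.univ.filter (fun j => c i ≤ c j)).card < 2 * N ∧
        (∑ j ∈ Finset.univ.filter (fun j => c j < c i), c j) /
          ((2 * N : ℝ) - (Finset.univ.filter (fun j => c i ≤ c j)).card) < c i)).card ≤
      2 * N - 1 :=
  (card_le_card (monotone_filter_right univ fun _ _ => And.left)).trans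
    (univ.card_filter_card_filter_le_lt_le c (2 * N))

/-- In a widely-linear system (effective processing gain `2N`) there can be at most
`2N - 1` oversized users, where user `i` is oversized if `2N - #{j : cⱼ ≥ cᵢ} > 0`
and `cᵢ > (∑_{j : cⱼ < cᵢ} cⱼ) / (2N - #{j : cⱼ ≥ cᵢ})`. -/
theorem card_oversized_users_le {K N : ℕ} (hK : 0 < K) (hN : 0 < N)
    (c : Fin K → ℝ) (hc : ∀ j, 0 < c j) :
    (Finset.univ.filter (fun i : Fin K =>
        (Finset.univ.filter (fun j => c i ≤ c j)).card < 2 * N ∧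
        (∑ j ∈ Finset.univ.filter (fun j => c j < c i), c j) /
          ((2 * N : ℝ) - (Finset.univ.filter (fun j => c i ≤ c j)).card) < c i)).card ≤
      2 * N - 1 :=
  card_oversized_users_le_general c
end

section
/- Let f be the map that sends a matrix S_a ∈ 𝒮, whose k-th column is (v_k; v̄_k) with v_k ∈ ℂ^N and ‖v_k‖² = 1/2, to the real matrix S_r ∈ ℝ^{2N×K} whose k-th column is √2·(Re v_k; Im v_k). Then f is a bijection from 𝒮 onto the set of real 2N×K matrices with unit-norm columns, and for every S_a ∈ 𝒮 the Gram matrices coincide: every entry of S_a^H S_a is real and S_a^H S_a = f(S_a)^T f(S_a). -/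
/-!
An augmented column `(v; v̄)` is determined by `v`, i.e. by the real vector `(Re v; Im v)`.
Since `conj a * b + a * conj b = 2 (Re a Re b + Im a Im b)`, the Gram matrix of the augmented
columns equals the real Gram matrix of the columns `√2 (Re v; Im v)`; in particular the unit-norm
conditions on both sides correspond, and the inverse map is `R ↦ (v; v̄)` with `v = (R₁ + i R₂)/√2`.
-/

open Matrix

/-- The map sending an augmented matrix whose `k`-th column is `(vₖ; v̄ₖ)` to the
real matrix whose `k`-th column is `√2 (Re vₖ; Im vₖ)`. -/
noncomputable def augToReal {N K : ℕ} (S : Matrix (Fin N ⊕ Fin N) (Fin K) ℂ) :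
    Matrix (Fin N ⊕ Fin N) (Fin K) ℝ :=
  Matrix.of fun p k =>
    Sum.elim (fun i => Real.sqrt 2 * (S (Sum.inl i) k).re)
      (fun i => Real.sqrt 2 * (S (Sum.inl i) k).im) p

open ComplexConjugate

lemma Complex.conj_mul_add_mul_conj (z w : ℂ) :
    conj z * w + z * conj w = ((2 * (z.re * w.re + z.im * w.im) : ℝ) : ℂ) := by
  rw [show z * conj w = conj (conj z * w) by simp, Complex.add_conj]
  simp

namespace AugSigSet

variable {N K : ℕ}

@[simp]
lemma augToReal_inl (S : Matrix (Fin N ⊕ Fin N) (Fin K) ℂ) (i : Fin N) (k : Fin K) :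
    augToReal S (Sum.inl i) k = √2 * (S (Sum.inl i) k).re :=
  rfl

@[simp]
lemma augToReal_inr (S : Matrix (Fin N ⊕ Fin N) (Fin K) ℂ) (i : Fin N) (k : Fin K) :
    augToReal S (Sum.inr i) k = √2 * (S (Sum.inl i) k).im :=
  rfl

lemma mem_iff {S : Matrix (Fin N ⊕ Fin N) (Fin K) ℂ} :
    S ∈ AugSigSet N K ↔
      (∀ i k, S (Sum.inr i) k = conj (S (Sum.inl i) k)) ∧ ∀ k, (Sᴴ * S) k k = 1 := by
  refine ⟨fun hS => ⟨fun i k => ?_, fun k => (hS k).2⟩, fun ⟨hc, hn⟩ k => ⟨⟨?_, ?_⟩, hn k⟩⟩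
  · obtain ⟨⟨v, hv⟩, -⟩ := hS k
    rw [show S (Sum.inr i) k = _ from congrFun hv (Sum.inr i),
      show S (Sum.inl i) k = _ from congrFun hv (Sum.inl i)]
    rfl
  · exact fun i => S (Sum.inl i) k
  · ext (i | i)
    · rfl
    · exact hc i k

lemma conjTranspose_mul_self_eq_augToReal {S : Matrix (Fin N ⊕ Fin N) (Fin K) ℂ}
    (hc : ∀ i k, S (Sum.inr i) k = conj (S (Sum.inl i) k)) :
    Sᴴ * S = ((augToReal S)ᵀ * augToReal S).map Complex.ofReal := by
  ext p q
  simp only [mul_apply, map_apply, conjTranspose_apply, transpose_apply, Fintype.sum_sum_type,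
    hc, augToReal_inl, augToReal_inr, RCLike.star_def, Complex.conj_conj, Complex.ofReal_add,
    Complex.ofReal_sum, ← Finset.sum_add_distrib, Complex.conj_mul_add_mul_conj]
  congr! 2 with i
  have h2 : √2 * √2 = 2 := Real.mul_self_sqrt zero_le_two
  norm_cast
  linear_combination -((S (Sum.inl i) p).re * (S (Sum.inl i) q).re
    + (S (Sum.inl i) p).im * (S (Sum.inl i) q).im) * h2

lemma augToReal_mapsTo :
    Set.MapsTo augToReal (AugSigSet N K) {R | ∀ k, Rᵀ k ⬝ᵥ Rᵀ k = 1} := by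
  intro S hS k
  have hdiag := (mem_iff.1 hS).2 k
  rw [conjTranspose_mul_self_eq_augToReal (mem_iff.1 hS).1, map_apply] at hdiag
  exact_mod_cast hdiag

lemma augToReal_injOn : Set.InjOn augToReal (AugSigSet N K) := by
  intro S hS T hT h
  have hinl : ∀ i k, S (Sum.inl i) k = T (Sum.inl i) k := fun i k =>
    Complex.ext (by simpa using congrFun₂ h (Sum.inl i) k) (by simpa using congrFun₂ h (Sum.inr i) k)
  ext (i | i) k
  · exact hinl i k
  · rw [(mem_iff.1 hS).1, (mem_iff.1 hT).1, hinl]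

noncomputable def realToAug (R : Matrix (Fin N ⊕ Fin N) (Fin K) ℝ) :
    Matrix (Fin N ⊕ Fin N) (Fin K) ℂ :=
  of fun p k =>
    Sum.elim (fun i => ⟨R (Sum.inl i) k / √2, R (Sum.inr i) k / √2⟩)
      (fun i => conj ⟨R (Sum.inl i) k / √2, R (Sum.inr i) k / √2⟩) p

lemma augToReal_realToAug (R : Matrix (Fin N ⊕ Fin N) (Fin K) ℝ) :
    augToReal (realToAug R) = R := by
  ext (i | i) k <;> simp [realToAug, mul_div_cancel₀]

lemma realToAug_mem {R : Matrix (Fin N ⊕ Fin N) (Fin K) ℝ} (hR : ∀ k, Rᵀ k ⬝ᵥ Rᵀ k = 1) :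
    realToAug R ∈ AugSigSet N K := by
  have hc : ∀ i k, realToAug R (Sum.inr i) k = conj (realToAug R (Sum.inl i) k) := fun _ _ => rfl
  refine mem_iff.2 ⟨hc, fun k => ?_⟩
  rw [conjTranspose_mul_self_eq_augToReal hc, augToReal_realToAug, map_apply]
  exact_mod_cast hR k

lemma augToReal_surjOn :
    Set.SurjOn augToReal (AugSigSet N K) {R | ∀ k, Rᵀ k ⬝ᵥ Rᵀ k = 1} :=
  fun R hR => ⟨realToAug R, realToAug_mem hR, augToReal_realToAug R⟩

end AugSigSet

theorem augToReal_bijOn_and_gram_general {N K : ℕ} :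
    Set.BijOn (augToReal (N := N) (K := K)) (AugSigSet N K)
      {R : Matrix (Fin N ⊕ Fin N) (Fin K) ℝ | ∀ k, (Rᵀ k) ⬝ᵥ (Rᵀ k) = 1} ∧
    ∀ S ∈ AugSigSet N K,
      (∀ p q, ((Sᴴ * S) p q).im = 0) ∧
      Sᴴ * S = ((augToReal S)ᵀ * augToReal S).map Complex.ofReal := by
  refine ⟨⟨AugSigSet.augToReal_mapsTo, AugSigSet.augToReal_injOn, AugSigSet.augToReal_surjOn⟩,
    fun S hS => ?_⟩
  have gram := AugSigSet.conjTranspose_mul_self_eq_augToReal (AugSigSet.mem_iff.1 hS).1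
  exact ⟨fun p q => by simp [gram], gram⟩

/-- `augToReal` is a bijection from `𝒮` onto the set of real `2N × K` matrices with
unit-norm columns, and it preserves Gram matrices: every entry of `Sᴴ S` is real
and `Sᴴ S = f(S)ᵀ f(S)`. -/
theorem augToReal_bijOn_and_gram {N K : ℕ} (hN : 0 < N) (hK : 0 < K) :
    Set.BijOn (augToReal (N := N) (K := K)) (AugSigSet N K)
      {R : Matrix (Fin N ⊕ Fin N) (Fin K) ℝ | ∀ k, (Rᵀ k) ⬝ᵥ (Rᵀ k) = 1} ∧
    ∀ S ∈ AugSigSet N K,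
      (∀ p q, ((Sᴴ * S) p q).im = 0) ∧
      Sᴴ * S = ((augToReal S)ᵀ * augToReal S).map Complex.ofReal :=
  augToReal_bijOn_and_gram_general
end

section
/- Let a_1,…,a_K > 0, let A = diag(a_1²,…,a_K²), and let σ² > 0. Then the supremum over S_a ∈ 𝒮 of the (real) determinant det(I_{2N} + σ^{-2} S_a A S_a^H) equals the supremum over all real matrices S_r ∈ ℝ^{2N×K} with unit-norm columns of det(I_{2N} + σ^{-2} S_r A S_r^T). In terms of sum-capacity, C_{sum,WL} = 2·C_{sum,R}, where C_{sum,WL} = sup_{S_a∈𝒮} log det(I_{2N} + σ^{-2} S_a A S_a^H) and C_{sum,R} = sup_{S_r} (1/2) log det(I_{2N} + σ^{-2} S_r A S_r^T). -/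
open Matrix

/-!
The unitary `T = (1/√2) [[I, iI], [I, -iI]]` maps the real vectors of `ℝ^{2N}` bijectively onto
the augmented vectors `(v; v̄)`, preserving norms. Hence `S_a = T S_r` is a bijection between `𝒮`
and the real `2N × K` matrices with unit columns, and
`I + σ⁻² S_a A S_aᴴ = T (I + σ⁻² S_r A S_rᵀ) Tᴴ` has the same determinant. So both problems range
over the same set of determinants, and the factor `2` is the `1/2` in `C_{sum,R}`.
-/

section Unitary

variable {n : Type*} [Fintype n] [DecidableEq n] {α : Type*} [CommRing α] [StarRing α]

theorem det_one_add_smul_conj_of_mem_unitaryGroup {U : Matrix n n α}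
    (hU : U ∈ unitaryGroup n α) (r : α) (M : Matrix n n α) :
    det (1 + r • (U * M * star U)) = det (1 + r • M) := by
  have hconj : 1 + r • (U * M * star U) = U * (1 + r • M) * star U := by
    rw [Matrix.mul_add, Matrix.add_mul, Matrix.mul_one, mem_unitaryGroup_iff.1 hU,
      Matrix.mul_smul, Matrix.smul_mul, Matrix.mul_assoc]
  rw [hconj, det_conj_of_mul_eq_one (mem_unitaryGroup_iff.1 hU) (mem_unitaryGroup_iff'.1 hU)]

theorem star_mulVec_dotProduct_mulVec_of_mem_unitaryGroup {U : Matrix n n α}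
    (hU : U ∈ unitaryGroup n α) (w : n → α) :
    star (U *ᵥ w) ⬝ᵥ (U *ᵥ w) = star w ⬝ᵥ w := by
  rw [star_mulVec, dotProduct_mulVec, vecMul_vecMul, ← star_eq_conjTranspose,
    mem_unitaryGroup_iff'.1 hU, vecMul_one]

end Unitary

section OfReal

variable {n m : Type*} [Fintype n] [Fintype m]

theorem star_ofReal_dotProduct_ofReal (r : n → ℝ) :
    star (fun i => (r i : ℂ)) ⬝ᵥ (fun i => (r i : ℂ)) = ((r ⬝ᵥ r : ℝ) : ℂ) := by
  simp [dotProduct, Complex.conj_ofReal]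

variable [DecidableEq n]

theorem ofReal_det_one_add_smul (σ : ℝ) (R : Matrix n n ℝ) :
    ((det (1 + σ • R) : ℝ) : ℂ) = det (1 + (σ : ℂ) • R.map Complex.ofReal) := by
  rw [← Complex.ofRealHom_eq_coe, RingHom.map_det]
  congr 1
  ext i j
  by_cases h : i = j <;> simp [one_apply, h]

theorem det_one_add_smul_conj_map_ofReal {U : Matrix n n ℂ} (hU : U ∈ unitaryGroup n ℂ)
    (S : Matrix n m ℝ) (A : Matrix m m ℝ) (σ : ℝ) :
    det (1 + (σ : ℂ) • (U * S.map Complex.ofReal * A.map Complex.ofReal *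
        (U * S.map Complex.ofReal)ᴴ)) = ((det (1 + σ • (S * A * Sᵀ)) : ℝ) : ℂ) := by
  have hmap : U * S.map Complex.ofReal * A.map Complex.ofReal * (U * S.map Complex.ofReal)ᴴ =
      U * (S * A * Sᵀ).map Complex.ofReal * star U := by
    have hS : (S.map Complex.ofReal)ᴴ = Sᵀ.map Complex.ofReal := by
      rw [← conjTranspose_eq_transpose_of_trivial,
        conjTranspose_map _ fun x => (Complex.conj_ofReal x).symm]
    rw [conjTranspose_mul, hS, star_eq_conjTranspose,
      show Complex.ofReal = ⇑Complex.ofRealHom from rfl, Matrix.map_mul, Matrix.map_mul]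
    simp only [Matrix.mul_assoc]
  rw [hmap, det_one_add_smul_conj_of_mem_unitaryGroup hU, ofReal_det_one_add_smul]

end OfReal

section RealToAug

open Complex

variable {N : ℕ}

/-- `realToAug N *ᵥ (x; y) = ((x + i y) / √2; (x - i y) / √2)`, so real vectors go exactly to
augmented ones. -/
noncomputable def realToAug (N : ℕ) : Matrix (Fin N ⊕ Fin N) (Fin N ⊕ Fin N) ℂ :=
  ((√2 : ℝ) : ℂ)⁻¹ • fromBlocks 1 (I • 1) 1 (-I • 1)

theorem realToAug_mem_unitaryGroup : realToAug N ∈ unitaryGroup (Fin N ⊕ Fin N) ℂ := by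
  have hblocks : fromBlocks 1 (I • 1) 1 (-I • 1) * (fromBlocks 1 (I • 1) 1 (-I • 1))ᴴ =
      (2 : ℂ) • (1 : Matrix (Fin N ⊕ Fin N) (Fin N ⊕ Fin N) ℂ) := by
    rw [fromBlocks_conjTranspose, fromBlocks_multiply, ← fromBlocks_one, fromBlocks_smul]
    simp [smul_smul, one_add_one_eq_two, ofNat_smul_eq_nsmul]
  have hscalar : ((√2 : ℝ) : ℂ)⁻¹ * star ((√2 : ℝ) : ℂ)⁻¹ * 2 = 1 := by
    rw [star_inv₀, Complex.star_def, conj_ofReal, ← mul_inv, ← ofReal_mul,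
      Real.mul_self_sqrt zero_le_two, ofReal_ofNat, inv_mul_cancel₀ two_ne_zero]
  rw [mem_unitaryGroup_iff, star_eq_conjTranspose, realToAug, conjTranspose_smul,
    smul_mul_smul_comm, hblocks, smul_smul, hscalar, one_smul]

theorem realToAug_mulVec_ofReal (r : Fin N ⊕ Fin N → ℝ) :
    realToAug N *ᵥ (fun i => (r i : ℂ)) =
      Sum.elim (fun i => ((√2 : ℝ) : ℂ)⁻¹ * (r (.inl i) + I * r (.inr i)))
        (star fun i => ((√2 : ℝ) : ℂ)⁻¹ * (r (.inl i) + I * r (.inr i))) := by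
  ext (i | i) <;>
    simp [realToAug, mulVec, dotProduct, fromBlocks, Fintype.sum_sum_type, one_apply,
      conj_ofReal] <;>
    ring

theorem exists_eq_sum_elim_star_iff_realToAug {w : Fin N ⊕ Fin N → ℂ} :
    (∃ v : Fin N → ℂ, w = Sum.elim v (star v)) ↔
      ∃ r : Fin N ⊕ Fin N → ℝ, w = realToAug N *ᵥ fun i => (r i : ℂ) := by
  constructor
  · rintro ⟨v, rfl⟩
    refine ⟨Sum.elim (fun i => √2 * (v i).re) (fun i => √2 * (v i).im), ?_⟩
    have hv :
        (fun i => ((√2 : ℝ) : ℂ)⁻¹ * ((√2 * (v i).re : ℝ) + I * (√2 * (v i).im : ℝ))) = v := by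
      ext i
      push_cast
      field_simp
      rw [mul_comm, re_add_im]
    rw [realToAug_mulVec_ofReal]
    simp only [Sum.elim_inl, Sum.elim_inr, hv]
  · rintro ⟨r, rfl⟩
    exact ⟨_, realToAug_mulVec_ofReal r⟩

theorem mem_augUnitVec_iff {w : Fin N ⊕ Fin N → ℂ} :
    w ∈ AugUnitVec N ↔
      ∃ r : Fin N ⊕ Fin N → ℝ, r ⬝ᵥ r = 1 ∧ w = realToAug N *ᵥ fun i => (r i : ℂ) := by
  have hnorm (r : Fin N ⊕ Fin N → ℝ) :
      star (realToAug N *ᵥ fun i => (r i : ℂ)) ⬝ᵥ (realToAug N *ᵥ fun i => (r i : ℂ)) =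
        ((r ⬝ᵥ r : ℝ) : ℂ) := by
    rw [star_mulVec_dotProduct_mulVec_of_mem_unitaryGroup realToAug_mem_unitaryGroup,
      star_ofReal_dotProduct_ofReal]
  rw [AugUnitVec, Set.mem_ofPred_eq, exists_eq_sum_elim_star_iff_realToAug]
  constructor
  · rintro ⟨⟨r, rfl⟩, hw⟩
    exact ⟨r, by exact_mod_cast (hnorm r).symm.trans hw, rfl⟩
  · rintro ⟨r, hr, rfl⟩
    exact ⟨⟨r, rfl⟩, by rw [hnorm, hr, ofReal_one]⟩

theorem mem_augSigSet_iff {K : ℕ} {Sa : Matrix (Fin N ⊕ Fin N) (Fin K) ℂ} :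
    Sa ∈ AugSigSet N K ↔ ∃ Sr : Matrix (Fin N ⊕ Fin N) (Fin K) ℝ,
      (∀ k, Srᵀ k ⬝ᵥ Srᵀ k = 1) ∧ Sa = realToAug N * Sr.map ofReal := by
  simp only [AugSigSet, Set.mem_ofPred_eq, mem_augUnitVec_iff]
  constructor
  · intro h
    choose r hr hSa using h
    exact ⟨(of r)ᵀ, hr, by ext i k; exact congrFun (hSa k) i⟩
  · rintro ⟨Sr, hSr, rfl⟩ k
    exact ⟨Srᵀ k, hSr k, rfl⟩

end RealToAug

theorem setOf_augSigSet_det_eq {N K : ℕ} (P : ℝ → ℝ) (Ar : Matrix (Fin K) (Fin K) ℝ)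
    (σ : ℝ) :
    {x : ℝ | ∃ Sa ∈ AugSigSet N K,
        x = P (det (1 + (σ : ℂ)⁻¹ • (Sa * Ar.map Complex.ofReal * Saᴴ))).re} =
      {x : ℝ | ∃ Sr : Matrix (Fin N ⊕ Fin N) (Fin K) ℝ,
        (∀ k, Srᵀ k ⬝ᵥ Srᵀ k = 1) ∧
          x = P (det (1 + σ⁻¹ • (Sr * Ar * Srᵀ)))} := by
  have hdet (Sr : Matrix (Fin N ⊕ Fin N) (Fin K) ℝ) :
      (det (1 + (σ : ℂ)⁻¹ • (realToAug N * Sr.map Complex.ofReal * Ar.map Complex.ofReal *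
        (realToAug N * Sr.map Complex.ofReal)ᴴ))).re =
        det (1 + σ⁻¹ • (Sr * Ar * Srᵀ)) := by
    rw [← Complex.ofReal_inv, det_one_add_smul_conj_map_ofReal realToAug_mem_unitaryGroup,
      Complex.ofReal_re]
  ext x
  constructor
  · rintro ⟨Sa, hSa, rfl⟩
    obtain ⟨Sr, hSr, rfl⟩ := mem_augSigSet_iff.1 hSa
    exact ⟨Sr, hSr, by rw [hdet]⟩
  · rintro ⟨Sr, hSr, rfl⟩
    exact ⟨_, mem_augSigSet_iff.2 ⟨Sr, hSr, rfl⟩, by rw [hdet]⟩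

open Pointwise in
theorem Real.sSup_setOf_exists_eq_mul {ι : Type*} (p : ι → Prop) (f : ι → ℝ) {c : ℝ}
    (hc : 0 ≤ c) :
    sSup {x | ∃ i, p i ∧ x = c * f i} = c * sSup {x | ∃ i, p i ∧ x = f i} := by
  have hset : {x | ∃ i, p i ∧ x = c * f i} = c • {x | ∃ i, p i ∧ x = f i} := by
    ext x
    simp only [Set.mem_smul_set, Set.mem_ofPred_eq, smul_eq_mul]
    constructor
    · rintro ⟨i, hi, rfl⟩
      exact ⟨_, ⟨i, hi, rfl⟩, rfl⟩
    · rintro ⟨_, ⟨i, hi, rfl⟩, rfl⟩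
      exact ⟨i, hi, rfl⟩
  rw [hset, Real.sSup_smul_of_nonneg hc, smul_eq_mul]

theorem wl_sum_capacity_eq_twice_real_general {N K : ℕ}
    (a : Fin K → ℝ)
    (A : Matrix (Fin K) (Fin K) ℂ) (hA : A = Matrix.diagonal fun j => ((a j) ^ 2 : ℂ))
    (Ar : Matrix (Fin K) (Fin K) ℝ) (hAr : Ar = Matrix.diagonal fun j => (a j) ^ 2)
    (σ2 : ℝ) :
    sSup {x : ℝ | ∃ Sa ∈ AugSigSet N K,
        x = ((1 : Matrix (Fin N ⊕ Fin N) (Fin N ⊕ Fin N) ℂ) +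
          ((σ2 : ℂ))⁻¹ • (Sa * A * Saᴴ)).det.re} =
      sSup {x : ℝ | ∃ Sr : Matrix (Fin N ⊕ Fin N) (Fin K) ℝ,
        (∀ k, (Srᵀ k) ⬝ᵥ (Srᵀ k) = 1) ∧
        x = ((1 : Matrix (Fin N ⊕ Fin N) (Fin N ⊕ Fin N) ℝ) +
          σ2⁻¹ • (Sr * Ar * Srᵀ)).det} ∧
    sSup {x : ℝ | ∃ Sa ∈ AugSigSet N K,
        x = Real.log ((1 : Matrix (Fin N ⊕ Fin N) (Fin N ⊕ Fin N) ℂ) +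
          ((σ2 : ℂ))⁻¹ • (Sa * A * Saᴴ)).det.re} =
      2 * sSup {x : ℝ | ∃ Sr : Matrix (Fin N ⊕ Fin N) (Fin K) ℝ,
        (∀ k, (Srᵀ k) ⬝ᵥ (Srᵀ k) = 1) ∧
        x = (1 / 2) * Real.log ((1 : Matrix (Fin N ⊕ Fin N) (Fin N ⊕ Fin N) ℝ) +
          σ2⁻¹ • (Sr * Ar * Srᵀ)).det} := by
  obtain rfl : A = Ar.map Complex.ofReal := by
    rw [hA, hAr, diagonal_map Complex.ofReal_zero]
    simp
  refine ⟨congrArg sSup (setOf_augSigSet_det_eq (fun x => x) Ar σ2), ?_⟩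
  rw [setOf_augSigSet_det_eq Real.log, Real.sSup_setOf_exists_eq_mul _ _ one_half_pos.le]
  ring

/-- The supremum over `S_a ∈ 𝒮` of `det (I + σ⁻² S_a A S_aᴴ)` equals the supremum
over all real `2N × K` matrices with unit-norm columns of
`det (I + σ⁻² S_r A S_rᵀ)`; hence `C_{sum,WL} = 2 C_{sum,R}`. -/
theorem wl_sum_capacity_eq_twice_real {N K : ℕ} (hN : 0 < N) (hK : 0 < K)
    (a : Fin K → ℝ) (ha : ∀ j, 0 < a j)
    (A : Matrix (Fin K) (Fin K) ℂ) (hA : A = Matrix.diagonal fun j => ((a j) ^ 2 : ℂ))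
    (Ar : Matrix (Fin K) (Fin K) ℝ) (hAr : Ar = Matrix.diagonal fun j => (a j) ^ 2)
    (σ2 : ℝ) (hσ2 : 0 < σ2) :
    sSup {x : ℝ | ∃ Sa ∈ AugSigSet N K,
        x = ((1 : Matrix (Fin N ⊕ Fin N) (Fin N ⊕ Fin N) ℂ) +
          ((σ2 : ℂ))⁻¹ • (Sa * A * Saᴴ)).det.re} =
      sSup {x : ℝ | ∃ Sr : Matrix (Fin N ⊕ Fin N) (Fin K) ℝ,
        (∀ k, (Srᵀ k) ⬝ᵥ (Srᵀ k) = 1) ∧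
        x = ((1 : Matrix (Fin N ⊕ Fin N) (Fin N ⊕ Fin N) ℝ) +
          σ2⁻¹ • (Sr * Ar * Srᵀ)).det} ∧
    sSup {x : ℝ | ∃ Sa ∈ AugSigSet N K,
        x = Real.log ((1 : Matrix (Fin N ⊕ Fin N) (Fin N ⊕ Fin N) ℂ) +
          ((σ2 : ℂ))⁻¹ • (Sa * A * Saᴴ)).det.re} =
      2 * sSup {x : ℝ | ∃ Sr : Matrix (Fin N ⊕ Fin N) (Fin K) ℝ,
        (∀ k, (Srᵀ k) ⬝ᵥ (Srᵀ k) = 1) ∧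
        x = (1 / 2) * Real.log ((1 : Matrix (Fin N ⊕ Fin N) (Fin N ⊕ Fin N) ℝ) +
          σ2⁻¹ • (Sr * Ar * Srᵀ)).det} :=
  wl_sum_capacity_eq_twice_real_general a A hA Ar hAr σ2
end
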